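/- arXiv:1601.01865 — 6 statements merged into one kernel-verified Lean document; each statement's English description precedes it below -/
import Mathlib

section
/- Let 1 → K → G → H → 1 be a short exact sequence of groups with K finite. If G contains no subgroup isomorphic to the Prüfer p-group ℤ/p^∞, then H contains no subgroup isomorphic to ℤ/p^∞. -/
/-!
A copy of `ℤ/p^∞` in a group amounts to a sequence with `w 0 = 1`, `w 1 ≠ 1` and
`w (i + 1) ^ p = w i`: the generators `1/p^k` of `ℤ/p^∞` form one, and conversely, since such a
`w k` has order `p ^ k`, the assignment `n/p^k ↦ w k ^ n` is a well-defined injective homomorphism.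

Given such a sequence `x` in `H`, Kőnig's lemma over the finite fibres of `π` lifts it to a
sequence `y` in `G` with `y (i + 1) ^ p = y i`. As `y 0` lies in the finite kernel, it has some
finite order `m`, and `i ↦ y i ^ m` is again such a sequence, now starting at `1`. In a
`ℤ/p^∞`-free group it is therefore constantly `1`, whereas `π (y m ^ m) = x m ^ m ≠ 1` because
`x m` has order `p ^ m > m`.
-/

/-- The Prüfer `p`-group `ℤ/p^∞`, realised as the `p`-primary component of `ℚ/ℤ`. -/
noncomputable def PruferGroup (p : ℕ) [Fact p.Prime] : AddSubgroup (AddCircle (1 : ℚ)) :=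
  AddCommGroup.primaryComponent (AddCircle (1 : ℚ)) p

/-- A group `G` is `ℤ/p^∞`-free if it contains no subgroup isomorphic to the Prüfer
`p`-group. -/
def IsZpInftyFree (p : ℕ) [Fact p.Prime] (G : Type*) [Group G] : Prop :=
  ¬ ∃ A : Subgroup G, Nonempty (A ≃* Multiplicative (PruferGroup p))

def IsRootSeq {M : Type*} [Monoid M] (p : ℕ) (w : ℕ → M) : Prop :=
  ∀ i, w (i + 1) ^ p = w i

namespace IsRootSeq

section Monoid

variable {M N : Type*} [Monoid M] [Monoid N] {p : ℕ} {w : ℕ → M}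

theorem pow_pow_eq (hw : IsRootSeq p w) (i d : ℕ) : w (i + d) ^ p ^ d = w i := by
  induction d with
  | zero => simp
  | succ d ih => rw [pow_succ', pow_mul, ← add_assoc, hw, ih]

theorem shift (hw : IsRootSeq p w) (k : ℕ) : IsRootSeq p (fun i => w (k + i)) :=
  fun i => hw (k + i)

theorem pow (hw : IsRootSeq p w) (n : ℕ) : IsRootSeq p (fun i => w i ^ n) := fun i => by
  simp only [← hw i, pow_right_comm]

theorem map (hw : IsRootSeq p w) (f : M →* N) : IsRootSeq p (fun i => f (w i)) := fun i => by
  simp only [← map_pow, hw i]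

theorem orderOf_eq [Fact p.Prime] (hw : IsRootSeq p w) (h0 : w 0 = 1) (h1 : w 1 ≠ 1) (i : ℕ) :
    orderOf (w i) = p ^ i := by
  cases i with
  | zero => simpa using h0
  | succ i =>
    refine orderOf_eq_prime_pow ?_ ?_
    · simpa only [add_comm i 1, hw.pow_pow_eq] using h1
    · have h := hw.pow_pow_eq 0 (i + 1)
      rwa [zero_add, h0] at h

end Monoid

section Group

variable {A G : Type*} [Group A] [Group G] {p : ℕ} {u : ℕ → A} {w : ℕ → G}

theorem zpow_eq_zpow_mul_pow_sub (hw : IsRootSeq p w) {k K : ℕ} (h : k ≤ K) (n : ℤ) :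
    w k ^ n = w K ^ (n * (p : ℤ) ^ (K - k)) := by
  obtain ⟨d, rfl⟩ := Nat.exists_eq_add_of_le h
  rw [Nat.add_sub_cancel_left, mul_comm, zpow_mul, ← hw.pow_pow_eq k d]
  norm_cast

theorem zpow_eq_zpow_iff (hu : IsRootSeq p u) (hw : IsRootSeq p w)
    (hord : ∀ k, orderOf (u k) = orderOf (w k)) (k k' : ℕ) (n n' : ℤ) :
    u k ^ n = u k' ^ n' ↔ w k ^ n = w k' ^ n' := by
  have hk := le_max_left k k'
  have hk' := le_max_right k k'
  rw [hu.zpow_eq_zpow_mul_pow_sub hk, hu.zpow_eq_zpow_mul_pow_sub hk',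
    hw.zpow_eq_zpow_mul_pow_sub hk, hw.zpow_eq_zpow_mul_pow_sub hk', zpow_eq_zpow_iff_modEq,
    zpow_eq_zpow_iff_modEq, hord]

theorem exists_injective_monoidHom (hu : IsRootSeq p u) (hw : IsRootSeq p w)
    (hord : ∀ k, orderOf (u k) = orderOf (w k)) (hcover : ∀ x, ∃ k, ∃ n : ℤ, u k ^ n = x) :
    ∃ f : A →* G, Function.Injective f := by
  choose k n hkn using hcover
  have hwd : ∀ x k' (n' : ℤ), u k' ^ n' = x → w (k x) ^ n x = w k' ^ n' := fun x k' n' h =>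
    (hu.zpow_eq_zpow_iff hw hord (k x) k' (n x) n').mp ((hkn x).trans h.symm)
  let f : A →* G :=
    { toFun := fun x => w (k x) ^ n x
      map_one' := (hwd 1 0 0 (zpow_zero _)).trans (zpow_zero _)
      map_mul' := fun x y => by
        obtain ⟨K, hxK, hyK⟩ : ∃ K, k x ≤ K ∧ k y ≤ K := ⟨_, le_max_left _ _, le_max_right _ _⟩
        have hx := (hu.zpow_eq_zpow_mul_pow_sub hxK (n x)).symm.trans (hkn x)
        have hy := (hu.zpow_eq_zpow_mul_pow_sub hyK (n y)).symm.trans (hkn y)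
        have hxy : u K ^ (n x * (p : ℤ) ^ (K - k x) + n y * (p : ℤ) ^ (K - k y)) = x * y := by
          rw [zpow_add, hx, hy]
        rw [hwd x _ _ hx, hwd y _ _ hy, hwd (x * y) _ _ hxy, zpow_add] }
  refine ⟨f, (injective_iff_map_eq_one f).mpr fun x hx => ?_⟩
  rw [← hkn x, ← zpow_zero (u (k x)), hu.zpow_eq_zpow_iff hw hord, zpow_zero]
  exact hx

end Group

open CategoryTheory in
theorem exists_lift_of_finite_ker {G H : Type*} [Group G] [Group H] {p : ℕ} (π : G →* H)
    (hπ : Function.Surjective π) [Finite π.ker] {x : ℕ → H} (hx : IsRootSeq p x) :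
    ∃ y : ℕ → G, IsRootSeq p y ∧ ∀ i, π (y i) = x i := by
  let F : ℕᵒᵖ ⥤ Type _ := Functor.ofOpSequence (X := fun i => {g : G // π g = x i})
    fun i => TypeCat.ofHom fun g => ⟨g.1 ^ p, by rw [map_pow, g.2, hx]⟩
  have hfin : ∀ i, Finite (F.obj i) := fun i => by
    obtain ⟨g₀, hg₀⟩ := hπ (x i.unop)
    refine Finite.of_injective (β := π.ker)
      (fun g => ⟨g₀⁻¹ * g.1, by simp [MonoidHom.mem_ker, hg₀, g.2]⟩) fun a b hab => ?_
    exact Subtype.ext (by simpa [Subtype.ext_iff] using hab)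
  have hne : ∀ i, Nonempty (F.obj i) := fun i => by
    obtain ⟨g, hg⟩ := hπ (x i.unop)
    exact ⟨⟨g, hg⟩⟩
  obtain ⟨s, hs⟩ := nonempty_sections_of_finite_inverse_system F
  refine ⟨fun i => (s (.op i)).1, fun i => ?_, fun i => (s (.op i)).2⟩
  have h := congrArg Subtype.val (hs (homOfLE (Nat.le_add_right i 1)).op)
  simp only [F, Functor.ofOpSequence_map_homOfLE_succ] at h
  exact h

end IsRootSeq

instance : Fact ((0 : ℚ) < 1) := ⟨one_pos⟩

namespace PruferGroup

variable (p : ℕ) [Fact p.Prime]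

theorem mem_iff {x : AddCircle (1 : ℚ)} : x ∈ PruferGroup p ↔ ∃ k : ℕ, p ^ k • x = 0 :=
  Iff.rfl

theorem addOrderOf_coe_one_div_pow (k : ℕ) :
    addOrderOf (((1 / (p ^ k : ℕ) : ℚ)) : AddCircle (1 : ℚ)) = p ^ k :=
  AddCircle.addOrderOf_period_div (pow_pos (Fact.out : p.Prime).pos k)

noncomputable def gen (k : ℕ) : Multiplicative (PruferGroup p) :=
  .ofAdd ⟨((1 / (p ^ k : ℕ) : ℚ) : AddCircle (1 : ℚ)),
    (mem_iff p).mpr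
      ⟨k, addOrderOf_dvd_iff_nsmul_eq_zero.mp (addOrderOf_coe_one_div_pow p k).dvd⟩⟩

theorem orderOf_gen (k : ℕ) : orderOf (gen p k) = p ^ k := by
  rw [gen, orderOf_ofAdd_eq_addOrderOf, AddSubgroup.addOrderOf_mk, addOrderOf_coe_one_div_pow]

theorem isRootSeq_gen : IsRootSeq p (gen p) := fun k => by
  have hp : (p : ℚ) ≠ 0 := by exact_mod_cast (Fact.out : p.Prime).ne_zero
  apply Multiplicative.toAdd.injective
  apply Subtype.ext
  simp only [gen, toAdd_pow, toAdd_ofAdd, AddSubgroup.coe_nsmul, ← AddCircle.coe_nsmul]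
  congr 1
  rw [nsmul_eq_mul, pow_succ]
  push_cast
  field_simp

theorem exists_zpow_gen_eq (x : Multiplicative (PruferGroup p)) :
    ∃ k, ∃ n : ℤ, gen p k ^ n = x := by
  obtain ⟨y, k, hk⟩ := x
  obtain ⟨m, -, rfl⟩ := (AddCircle.nsmul_eq_zero_iff (pow_pos (Fact.out : p.Prime).pos k)).mp hk
  refine ⟨k, m, ?_⟩
  apply Multiplicative.toAdd.injective
  apply Subtype.ext
  simp only [gen, toAdd_zpow, toAdd_ofAdd, AddSubgroup.coe_zsmul, ← AddCircle.coe_zsmul]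
  congr 1
  push_cast [zsmul_eq_mul]
  ring

end PruferGroup

section ZpInftyFree

variable {p : ℕ} [Fact p.Prime] {G : Type*} [Group G]

theorem isZpInftyFree_iff :
    IsZpInftyFree p G ↔ ∀ w : ℕ → G, IsRootSeq p w → w 0 = 1 → w 1 = 1 := by
  have hgen := PruferGroup.isRootSeq_gen p
  constructor
  · intro hG w hw h0
    by_contra h1
    obtain ⟨f, hf⟩ := hgen.exists_injective_monoidHom hw
      (fun k => by rw [PruferGroup.orderOf_gen, hw.orderOf_eq h0 h1])
      (PruferGroup.exists_zpow_gen_eq p)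
    exact hG ⟨f.range, ⟨(MonoidHom.ofInjective hf).symm⟩⟩
  · rintro hG ⟨A, ⟨e⟩⟩
    let f : Multiplicative (PruferGroup p) →* G := A.subtype.comp e.symm.toMonoidHom
    have hf : Function.Injective f := A.subtype_injective.comp e.symm.injective
    have hord : ∀ k, orderOf (f (PruferGroup.gen p k)) = p ^ k := fun k => by
      rw [orderOf_injective f hf, PruferGroup.orderOf_gen]
    refine (Fact.out : p.Prime).ne_one ?_
    rw [← pow_one p, ← hord 1, hG _ (hgen.map f) (by rw [← orderOf_eq_one_iff, hord, pow_zero]),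
      orderOf_one]

theorem IsZpInftyFree.eq_one (hG : IsZpInftyFree p G) {w : ℕ → G} (hw : IsRootSeq p w)
    (h0 : w 0 = 1) (k : ℕ) : w k = 1 := by
  induction k with
  | zero => exact h0
  | succ k ih => exact isZpInftyFree_iff.mp hG _ (hw.shift k) ih

end ZpInftyFree

theorem zpInftyFree_quotient_of_finite_kernel_general (p : ℕ) [Fact p.Prime]
    {K G H : Type*} [Group K] [Group G] [Group H] [Finite K]
    (ι : K →* G) (π : G →* H)
    (hπ : Function.Surjective π)
    (hexact : ι.range = π.ker)
    (hG : IsZpInftyFree p G) :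
    IsZpInftyFree p H := by
  rw [isZpInftyFree_iff]
  intro x hx hx0
  by_contra hx1
  have : Finite π.ker := hexact ▸ Set.finite_range ι
  obtain ⟨y, hy, hπy⟩ := IsRootSeq.exists_lift_of_finite_ker π hπ hx
  have hy0 : y 0 ∈ π.ker := by rw [MonoidHom.mem_ker, hπy, hx0]
  set m := orderOf (y 0)
  have hm : 0 < m := by simpa only [Subgroup.orderOf_mk] using orderOf_pos (⟨y 0, hy0⟩ : π.ker)
  have hym : y m ^ m = 1 := hG.eq_one (hy.pow m) (pow_orderOf_eq_one (y 0)) m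
  have hdvd : p ^ m ∣ m := by
    rw [← hx.orderOf_eq hx0 hx1 m, orderOf_dvd_iff_pow_eq_one, ← hπy, ← map_pow, hym, map_one]
  exact (Nat.lt_pow_self (Fact.out : p.Prime).one_lt).not_ge (Nat.le_of_dvd hm hdvd)

/-- If `1 → K → G → H → 1` is a short exact sequence of groups with `K` finite and `G`
`ℤ/p^∞`-free, then `H` is `ℤ/p^∞`-free. -/
theorem zpInftyFree_quotient_of_finite_kernel (p : ℕ) [Fact p.Prime]
    {K G H : Type*} [Group K] [Group G] [Group H] [Finite K]
    (ι : K →* G) (π : G →* H)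
    (hι : Function.Injective ι) (hπ : Function.Surjective π)
    (hexact : ι.range = π.ker)
    (hG : IsZpInftyFree p G) :
    IsZpInftyFree p H :=
  zpInftyFree_quotient_of_finite_kernel_general p ι π hπ hexact hG
end

section
/- Let N be a finite normal subgroup of a group G. If g, h ∈ G lie in the same coset of N (i.e., g·h^{-1} ∈ N), then there exists an integer n with 1 ≤ n ≤ |N| such that g^n = h^n. -/
/-- If `N` is a finite normal subgroup of a group `G` and `g, h ∈ G` lie in the same coset
of `N`, then `g^n = h^n` for some `1 ≤ n ≤ |N|`. -/
theorem pow_eq_pow_of_same_coset {G : Type*} [Group G]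
    (N : Subgroup G) [N.Normal] [Finite N]
    (g h : G) (hgh : g * h⁻¹ ∈ N) :
    ∃ n : ℕ, 1 ≤ n ∧ n ≤ Nat.card N ∧ g ^ n = h ^ n := by
  have hN : N.Normal := inferInstance
  have hg : h⁻¹ * g ∈ N := by
    have := hN.conj_mem' _ hgh h
    simpa [mul_assoc] using this
  have key : ∀ n : ℕ, (h ^ n)⁻¹ * g ^ n ∈ N := by
    intro n
    induction n with
    | zero => simpa using N.one_mem
    | succ n ih =>
      have h1 : h⁻¹ * ((h ^ n)⁻¹ * g ^ n) * h ∈ N := hN.conj_mem' _ ih h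
      have h2 : (h⁻¹ * ((h ^ n)⁻¹ * g ^ n) * h) * (h⁻¹ * g) ∈ N := N.mul_mem h1 hg
      have : (h⁻¹ * ((h ^ n)⁻¹ * g ^ n) * h) * (h⁻¹ * g)
          = (h ^ (n + 1))⁻¹ * g ^ (n + 1) := by
        group
      rwa [this] at h2
  have hpos : 0 < Nat.card N := Nat.card_pos
  set f : Fin (Nat.card N + 1) → N := fun i => ⟨(h ^ (i : ℕ))⁻¹ * g ^ (i : ℕ), key i⟩ with hf
  have : Fintype N := Fintype.ofFinite _
  obtain ⟨i, j, hij, hfij⟩ := Fintype.exists_ne_map_eq_of_card_lt f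
    (by simp [Nat.card_eq_fintype_card])
  wlog hlt : (i : ℕ) < (j : ℕ) generalizing i j
  · exact this j i hij.symm hfij.symm (by have := Fin.val_ne_of_ne hij; omega)
  · have heq : (h ^ (i : ℕ))⁻¹ * g ^ (i : ℕ) = (h ^ (j : ℕ))⁻¹ * g ^ (j : ℕ) := by
      simpa [hf, Subtype.ext_iff] using hfij
    refine ⟨(j : ℕ) - (i : ℕ), by omega, by omega, ?_⟩
    have hji : (j : ℕ) = ((j : ℕ) - (i : ℕ)) + (i : ℕ) := by omega
    have : g ^ ((j : ℕ) - (i : ℕ)) * g ^ (i : ℕ) = h ^ ((j : ℕ) - (i : ℕ)) * g ^ (i : ℕ) := by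
      have h2 : g ^ (j : ℕ) = h ^ (j : ℕ) * ((h ^ (i : ℕ))⁻¹ * g ^ (i : ℕ)) := by
        rw [heq]; group
      rw [hji, pow_add, pow_add] at h2
      calc g ^ ((j : ℕ) - (i : ℕ)) * g ^ (i : ℕ) = h ^ ((j : ℕ) - (i : ℕ)) * h ^ (i : ℕ) * ((h ^ (i : ℕ))⁻¹ * g ^ (i : ℕ)) := h2
        _ = h ^ ((j : ℕ) - (i : ℕ)) * g ^ (i : ℕ) := by group
    exact mul_right_cancel this
end

section
/- Let S be a discrete p-toral group with maximal torus T (a discrete p-torus, normal in S with S/T a finite p-group), and let ζ ∈ ℤ_p^× with ζ ≡ 1 mod p and ζ ≠ 1. Suppose ψ₁, ψ₂ are automorphisms of S which both restrict to multiplication by ζ on T and induce the identity on S/T. Then there exists r > 0 such that ψ₁^{p^r} = ψ₂^{p^r}. -/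
/-! The difference `δ x = ψ₂ x * (ψ₁ x)⁻¹` lies in `T` and, since `ψ₁` and `ψ₂` agree on the
`p`-torsion group `T`, is constant on the cosets of `T`; so it takes finitely many values, all
killed by a common `p ^ K`. Iterating gives `ψ₂ ^ m x = δ x ^ (1 + a + ⋯ + a ^ (m - 1)) * ψ₁ ^ m x`,
where `ψ₂` raises `δ x` to a power `a ≡ ζ ≡ 1 (mod p)`, and for `m = p ^ s` this geometric sum
is divisible by `p ^ s`. -/

open Finset

theorem geom_sum_range_mul {R : Type*} [Semiring R] (a : R) (m n : ℕ) :
    ∑ i ∈ range (m * n), a ^ i = (∑ i ∈ range m, a ^ i) * ∑ j ∈ range n, (a ^ m) ^ j := by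
  induction n with
  | zero => simp
  | succ n ih =>
    rw [Nat.mul_succ, sum_range_add, ih, sum_range_succ, mul_add]
    simp only [pow_add, ← mul_sum, ← pow_mul]
    exact congrArg _ (Commute.sum_right _ _ _ fun i _ ↦ Commute.pow_pow_self a _ i).eq

theorem Nat.pow_dvd_geom_sum_prime_pow {p : ℕ} [Fact p.Prime] {a : ℕ} (ha : (a : ZMod p) = 1)
    (s : ℕ) : p ^ s ∣ ∑ i ∈ range (p ^ s), a ^ i := by
  induction s with
  | zero => simp
  | succ s ih =>
    rw [pow_succ, geom_sum_range_mul]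
    refine mul_dvd_mul ih ?_
    rw [← ZMod.natCast_eq_zero_iff]
    simp [ha]

theorem PadicInt.natCast_appr_eq_toZMod {p : ℕ} [Fact p.Prime] (x : ℤ_[p]) {k : ℕ} (hk : k ≠ 0) :
    ((x.appr k : ℕ) : ZMod p) = toZMod x := by
  obtain ⟨c, hc⟩ := Ideal.mem_span_singleton.mp (appr_spec k x)
  have := congrArg toZMod hc
  rw [map_sub, map_natCast, map_mul, map_pow, map_natCast, ZMod.natCast_self, zero_pow hk,
    zero_mul, sub_eq_zero] at this
  exact this.symm

theorem exists_forall_pow_pow_eq_one_of_finite_range {ι M : Type*} [Monoid M] {p : ℕ}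
    {f : ι → M} (hf : (Set.range f).Finite) (h : ∀ i, ∃ k : ℕ, f i ^ p ^ k = 1) :
    ∃ K : ℕ, ∀ i, f i ^ p ^ K = 1 := by
  have h' : ∀ y ∈ Set.range f, ∃ k : ℕ, y ^ p ^ k = 1 := Set.forall_mem_range.2 h
  choose! k hk using h'
  obtain ⟨K, hK⟩ := (hf.image k).bddAbove
  refine ⟨K, fun i ↦ ?_⟩
  have hkK : k (f i) ≤ K := hK ⟨f i, ⟨i, rfl⟩, rfl⟩
  rw [← pow_mul_pow_sub p hkK, pow_mul, hk _ ⟨i, rfl⟩, one_pow]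

theorem isPGroup_multiplicative_pi_pruferGroup (p : ℕ) [Fact p.Prime] (ι : Type*) [Finite ι] :
    IsPGroup p (Multiplicative (ι → PruferGroup p)) := by
  intro g
  obtain ⟨K, hK⟩ := exists_forall_pow_pow_eq_one_of_finite_range (p := p)
    (f := fun i ↦ Multiplicative.ofAdd (g.toAdd i : AddCircle (1 : ℚ))) (Set.finite_range _)
    fun i ↦ AddCommGroup.mem_primaryComponent.mp (g.toAdd i).2
  exact ⟨K, funext fun i ↦ Subtype.ext (hK i)⟩

theorem Set.finite_range_of_apply_mul_eq {S α : Type*} [Group S] {T : Subgroup S}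
    [Finite (S ⧸ T)] {f : S → α} (hf : ∀ x, ∀ t ∈ T, f (x * t) = f x) :
    (Set.range f).Finite := by
  refine (Set.finite_range fun q : S ⧸ T ↦ f q.out).subset ?_
  rintro _ ⟨x, rfl⟩
  obtain ⟨t, ht⟩ := QuotientGroup.mk_out_eq_mul T x
  exact ⟨x, by simp only [ht, hf x t t.2]⟩

namespace MulAut

variable {S : Type*} [Group S] (ψ₁ ψ₂ : MulAut S)

theorem apply_mul_inv_apply_mem {T : Subgroup S} [T.Normal] {x : S} (h₁ : x⁻¹ * ψ₁ x ∈ T)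
    (h₂ : x⁻¹ * ψ₂ x ∈ T) : ψ₂ x * (ψ₁ x)⁻¹ ∈ T := by
  simpa [mul_assoc] using Subgroup.Normal.conj_mem inferInstance _ (mul_mem h₂ (inv_mem h₁)) x

theorem apply_mul_mul_inv_apply_mul {x t : S} (ht : ψ₁ t = ψ₂ t) :
    ψ₂ (x * t) * (ψ₁ (x * t))⁻¹ = ψ₂ x * (ψ₁ x)⁻¹ := by
  simp only [map_mul, ht, mul_inv_rev, mul_assoc, mul_inv_cancel_left]

theorem pow_apply_eq_pow_geom_sum_mul {x : S} {a : ℕ}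
    (hinv : ∀ y, ψ₂ (ψ₁ y) * (ψ₁ (ψ₁ y))⁻¹ = ψ₂ y * (ψ₁ y)⁻¹)
    (ha : ψ₂ (ψ₂ x * (ψ₁ x)⁻¹) = (ψ₂ x * (ψ₁ x)⁻¹) ^ a) (m : ℕ) :
    (ψ₂ ^ m) x = (ψ₂ x * (ψ₁ x)⁻¹) ^ (∑ i ∈ range m, a ^ i) * (ψ₁ ^ m) x := by
  set d := ψ₂ x * (ψ₁ x)⁻¹
  have hd_orbit : ∀ m : ℕ, ψ₂ ((ψ₁ ^ m) x) * (ψ₁ ((ψ₁ ^ m) x))⁻¹ = d := by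
    intro m
    induction m with
    | zero => rfl
    | succ m ih => rw [pow_succ', mul_apply, hinv, ih]
  induction m with
  | zero => simp
  | succ m ih =>
    rw [pow_succ', mul_apply, ih, map_mul, map_pow, ha,
      ← inv_mul_cancel_right (ψ₂ ((ψ₁ ^ m) x)) (ψ₁ ((ψ₁ ^ m) x)), hd_orbit, geom_sum_succ,
      pow_succ, pow_mul, pow_succ', mul_apply]
    exact (mul_assoc _ _ _).symm

end MulAut

theorem adams_automorphisms_stably_equal_general (p : ℕ) [Fact p.Prime]
    (S : Type*) [Group S] (T : Subgroup S) [T.Normal]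
    (n : ℕ) (hT : Nonempty (T ≃* Multiplicative (Fin n → PruferGroup p)))
    (hquot : Finite (S ⧸ T))
    (ζ : ℤ_[p]ˣ) (hζ1 : ∃ v : ℤ_[p], (ζ : ℤ_[p]) = 1 + (p : ℤ_[p]) * v)
    (ψ₁ ψ₂ : MulAut S)
    (hψ₁T : ∀ t ∈ T, ∀ k : ℕ, t ^ (p ^ k) = 1 → ψ₁ t = t ^ (PadicInt.appr (ζ : ℤ_[p]) k))
    (hψ₂T : ∀ t ∈ T, ∀ k : ℕ, t ^ (p ^ k) = 1 → ψ₂ t = t ^ (PadicInt.appr (ζ : ℤ_[p]) k))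
    (hψ₁q : ∀ s : S, s⁻¹ * ψ₁ s ∈ T)
    (hψ₂q : ∀ s : S, s⁻¹ * ψ₂ s ∈ T) :
    ∃ s : ℕ, 0 < s ∧ ψ₁ ^ (p ^ s) = ψ₂ ^ (p ^ s) := by
  obtain ⟨e⟩ := hT
  have hTp : IsPGroup p T := (isPGroup_multiplicative_pi_pruferGroup p (Fin n)).of_equiv e.symm
  have horder : ∀ t ∈ T, ∃ k : ℕ, t ^ p ^ k = 1 := fun t ht ↦
    (hTp ⟨t, ht⟩).imp fun k hk ↦ by simpa using congrArg Subtype.val hk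
  have hagree : ∀ t ∈ T, ψ₁ t = ψ₂ t := fun t ht ↦ by
    obtain ⟨k, hk⟩ := horder t ht
    rw [hψ₁T t ht k hk, hψ₂T t ht k hk]
  have hδT : ∀ x, ψ₂ x * (ψ₁ x)⁻¹ ∈ T := fun x ↦
    ψ₁.apply_mul_inv_apply_mem ψ₂ (hψ₁q x) (hψ₂q x)
  have hδ_coset : ∀ x, ∀ t ∈ T, ψ₂ (x * t) * (ψ₁ (x * t))⁻¹ = ψ₂ x * (ψ₁ x)⁻¹ := fun x t ht ↦
    ψ₁.apply_mul_mul_inv_apply_mul ψ₂ (hagree t ht)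
  obtain ⟨K, hK⟩ := exists_forall_pow_pow_eq_one_of_finite_range
    (Set.finite_range_of_apply_mul_eq hδ_coset) fun x ↦ horder _ (hδT x)
  refine ⟨K + 1, K.succ_pos, MulEquiv.ext fun x ↦ ?_⟩
  set d := ψ₂ x * (ψ₁ x)⁻¹
  have hd : d ^ p ^ (K + 1) = 1 := by rw [pow_succ, pow_mul, hK, one_pow]
  have ha : ((ζ : ℤ_[p]).appr (K + 1) : ZMod p) = 1 := by
    obtain ⟨v, hv⟩ := hζ1
    simp [PadicInt.natCast_appr_eq_toZMod _ K.succ_ne_zero, hv]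
  obtain ⟨c, hc⟩ := Nat.pow_dvd_geom_sum_prime_pow ha (K + 1)
  rw [ψ₁.pow_apply_eq_pow_geom_sum_mul ψ₂ (fun y ↦ by simpa using hδ_coset y _ (hψ₁q y))
    (hψ₂T d (hδT x) _ hd), hc, pow_mul, hd, one_pow, one_mul]

/-- Let `S` be a discrete `p`-toral group with maximal torus `T` (so `T ⊴ S` is a discrete
`p`-torus and `S/T` is a finite `p`-group), and let `ζ ∈ ℤ_p^×` with `ζ ≡ 1 mod p`,
`ζ ≠ 1`.  If the automorphisms `ψ₁, ψ₂` of `S` both restrict to multiplication by `ζ` on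
`T` (i.e. on each element of order dividing `p^k` they raise to the power of the
approximation of `ζ` mod `p^k`) and both induce the identity on `S/T`, then
`ψ₁^{p^s} = ψ₂^{p^s}` for some `s > 0`. -/
theorem adams_automorphisms_stably_equal (p : ℕ) [Fact p.Prime]
    (S : Type*) [Group S] (T : Subgroup S) [T.Normal]
    (n : ℕ) (hT : Nonempty (T ≃* Multiplicative (Fin n → PruferGroup p)))
    (hquot : Finite (S ⧸ T)) (hquotp : IsPGroup p (S ⧸ T))
    (ζ : ℤ_[p]ˣ) (hζ1 : ∃ v : ℤ_[p], (ζ : ℤ_[p]) = 1 + (p : ℤ_[p]) * v)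
    (hζne : (ζ : ℤ_[p]) ≠ 1)
    (ψ₁ ψ₂ : MulAut S)
    (hψ₁T : ∀ t ∈ T, ∀ k : ℕ, t ^ (p ^ k) = 1 → ψ₁ t = t ^ (PadicInt.appr (ζ : ℤ_[p]) k))
    (hψ₂T : ∀ t ∈ T, ∀ k : ℕ, t ^ (p ^ k) = 1 → ψ₂ t = t ^ (PadicInt.appr (ζ : ℤ_[p]) k))
    (hψ₁q : ∀ s : S, s⁻¹ * ψ₁ s ∈ T)
    (hψ₂q : ∀ s : S, s⁻¹ * ψ₂ s ∈ T) :
    ∃ s : ℕ, 0 < s ∧ ψ₁ ^ (p ^ s) = ψ₂ ^ (p ^ s) :=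
  adams_automorphisms_stably_equal_general p S T n hT hquot ζ hζ1 ψ₁ ψ₂ hψ₁T hψ₂T hψ₁q hψ₂q
end

section
/- Let E = (D, C, Φ, π, δ) be an extension of a small category C by a functor Φ : C → Ab, and let σ be a regular section of π (a map on morphisms with π∘σ = id sending identities to identities). Then the 2-cochain z_σ defined by σ(c₁) ∘ σ(c₀) = δ(z_σ(c₁,c₀)) ∘ σ(c₁∘c₀) is a regular 2-cocycle, and for any two regular sections σ, σ′ the cocycles z_σ and z_{σ′} are cohomologous. -/
open CategoryTheory

/-- An extension `E = (D, C, Φ, π, δ)` of a small category `C` by a functor `Φ : C → Ab`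
(given unbundled by `M` on objects and `φ` on morphisms).  The category `D` has the same
objects as `C`; its hom-sets, identities and composition (in diagrammatic order) are
recorded, together with the projection `π` (the identity on objects) and the distinguished
automorphisms `δ`.  The axioms state that `Φ(Y)` acts freely on `D(X,Y)` by
post-composition with `π` as the quotient map, and the compatibility
`d ∘ δ_X(g) = δ_Y(Φ(π d)(g)) ∘ d`. -/
structure CatExtension (C : Type*) [Category C]
    (M : C → Type*) [∀ X, AddCommGroup (M X)]
    (φ : ∀ (X Y : C), (X ⟶ Y) → (M X →+ M Y)) : Type _ where
  Hom : C → C → Type*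
  id : ∀ X, Hom X X
  comp : ∀ {X Y Z : C}, Hom X Y → Hom Y Z → Hom X Z
  id_comp : ∀ {X Y : C} (d : Hom X Y), comp (id X) d = d
  comp_id : ∀ {X Y : C} (d : Hom X Y), comp d (id Y) = d
  assoc : ∀ {W X Y Z : C} (d₁ : Hom W X) (d₂ : Hom X Y) (d₃ : Hom Y Z),
    comp (comp d₁ d₂) d₃ = comp d₁ (comp d₂ d₃)
  π : ∀ {X Y : C}, Hom X Y → (X ⟶ Y)
  π_id : ∀ X, π (id X) = 𝟙 X
  π_comp : ∀ {X Y Z : C} (d₁ : Hom X Y) (d₂ : Hom Y Z), π (comp d₁ d₂) = π d₁ ≫ π d₂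
  δ : ∀ X, M X → Hom X X
  δ_zero : ∀ X, δ X 0 = id X
  δ_add : ∀ X (a b : M X), δ X (a + b) = comp (δ X a) (δ X b)
  π_δ : ∀ X (a : M X), π (δ X a) = 𝟙 X
  /-- the action of `Φ(Y)` on `D(X,Y)` by post-composition is free -/
  δ_free : ∀ {X Y : C} (d : Hom X Y) (a : M Y), comp d (δ Y a) = d → a = 0
  /-- `π` is surjective on morphisms -/
  π_surj : ∀ {X Y : C} (c : X ⟶ Y), ∃ d : Hom X Y, π d = c
  /-- `π` is the quotient by the `Φ(Y)`-action -/
  π_fiber : ∀ {X Y : C} (d d' : Hom X Y), π d = π d' → ∃ a : M Y, d' = comp d (δ Y a)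
  /-- Axiom (2): `d ∘ δ_X(g) = δ_Y(Φ(π d)(g)) ∘ d` -/
  compat : ∀ {X Y : C} (d : Hom X Y) (a : M X),
    comp (δ X a) d = comp d (δ Y (φ X Y (π d) a))

/-- For an extension `E` of `C` by `Φ` and a regular section `σ` of `π`, the 2-cochain
`z_σ` defined by `σ(c₁) ∘ σ(c₀) = δ(z_σ(c₁,c₀)) ∘ σ(c₁∘c₀)` is a regular 2-cocycle, and
the cocycles associated to any two regular sections are cohomologous. -/
theorem section_cocycle_regular_and_cohomologous
    {C : Type*} [Category C] (M : C → Type*) [∀ X, AddCommGroup (M X)]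
    (φ : ∀ (X Y : C), (X ⟶ Y) → (M X →+ M Y))
    (φ_id : ∀ X : C, φ X X (𝟙 X) = AddMonoidHom.id (M X))
    (φ_comp : ∀ (X Y Z : C) (f : X ⟶ Y) (g : Y ⟶ Z),
      φ X Z (f ≫ g) = (φ Y Z g).comp (φ X Y f))
    (E : CatExtension C M φ)
    (σ : ∀ (X Y : C), (X ⟶ Y) → E.Hom X Y)
    (hσπ : ∀ (X Y : C) (c : X ⟶ Y), E.π (σ X Y c) = c)
    (hσ1 : ∀ X : C, σ X X (𝟙 X) = E.id X)
    (z : ∀ (X₀ X₁ X₂ : C), (X₁ ⟶ X₂) → (X₀ ⟶ X₁) → M X₂)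
    (hz : ∀ (X₀ X₁ X₂ : C) (c₀ : X₀ ⟶ X₁) (c₁ : X₁ ⟶ X₂),
      E.comp (σ X₀ X₁ c₀) (σ X₁ X₂ c₁) =
        E.comp (σ X₀ X₂ (c₀ ≫ c₁)) (E.δ X₂ (z X₀ X₁ X₂ c₁ c₀))) :
    -- z is regular
    ((∀ (X Y : C) (c : X ⟶ Y), z X Y Y (𝟙 Y) c = 0 ∧ z X X Y c (𝟙 X) = 0) ∧
    -- z is a 2-cocycle
    (∀ (X₀ X₁ X₂ X₃ : C) (c₀ : X₀ ⟶ X₁) (c₁ : X₁ ⟶ X₂) (c₂ : X₂ ⟶ X₃),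
      φ X₂ X₃ c₂ (z X₀ X₁ X₂ c₁ c₀) + z X₀ X₂ X₃ c₂ (c₀ ≫ c₁)
        - z X₀ X₁ X₃ (c₁ ≫ c₂) c₀ - z X₁ X₂ X₃ c₂ c₁ = 0) ∧
    -- the cocycles of any two regular sections are cohomologous
    (∀ (σ' : ∀ (X Y : C), (X ⟶ Y) → E.Hom X Y),
      (∀ (X Y : C) (c : X ⟶ Y), E.π (σ' X Y c) = c) →
      (∀ X : C, σ' X X (𝟙 X) = E.id X) →
      ∀ (z' : ∀ (X₀ X₁ X₂ : C), (X₁ ⟶ X₂) → (X₀ ⟶ X₁) → M X₂),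
        (∀ (X₀ X₁ X₂ : C) (c₀ : X₀ ⟶ X₁) (c₁ : X₁ ⟶ X₂),
          E.comp (σ' X₀ X₁ c₀) (σ' X₁ X₂ c₁) =
            E.comp (σ' X₀ X₂ (c₀ ≫ c₁)) (E.δ X₂ (z' X₀ X₁ X₂ c₁ c₀))) →
        ∃ u : ∀ (X Y : C), (X ⟶ Y) → M Y,
          ∀ (X₀ X₁ X₂ : C) (c₀ : X₀ ⟶ X₁) (c₁ : X₁ ⟶ X₂),
            z' X₀ X₁ X₂ c₁ c₀ = z X₀ X₁ X₂ c₁ c₀ +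
              (u X₁ X₂ c₁ - u X₀ X₂ (c₀ ≫ c₁) + φ X₁ X₂ c₁ (u X₀ X₁ c₀)))) := by

  have cancel : ∀ {X Y : C} (d : E.Hom X Y) (a b : M Y),
      E.comp d (E.δ Y a) = E.comp d (E.δ Y b) → a = b := by
    intro X Y d a b h
    have h2 : E.comp (E.comp d (E.δ Y a)) (E.δ Y (-b))
        = E.comp (E.comp d (E.δ Y b)) (E.δ Y (-b)) := by rw [h]
    rw [E.assoc, E.assoc, ← E.δ_add, ← E.δ_add, add_neg_cancel, E.δ_zero, E.comp_id] at h2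
    have h3 := E.δ_free d (a + -b) h2
    exact add_neg_eq_zero.mp h3
  refine ⟨?_, ?_, ?_⟩
  · intro X Y c
    constructor
    · have h := hz X Y Y c (𝟙 Y)
      rw [hσ1, E.comp_id, Category.comp_id] at h
      exact E.δ_free _ _ h.symm
    · have h := hz X X Y (𝟙 X) c
      rw [hσ1, E.id_comp, Category.id_comp] at h
      exact E.δ_free _ _ h.symm
  · intro X₀ X₁ X₂ X₃ c₀ c₁ c₂
    have h1 : E.comp (E.comp (σ X₀ X₁ c₀) (σ X₁ X₂ c₁)) (σ X₂ X₃ c₂)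
        = E.comp (σ X₀ X₃ (c₀ ≫ c₁ ≫ c₂))
            (E.δ X₃ (z X₀ X₂ X₃ c₂ (c₀ ≫ c₁) + φ X₂ X₃ c₂ (z X₀ X₁ X₂ c₁ c₀))) := by
      rw [hz, E.assoc, E.compat, hσπ, ← E.assoc, hz, E.assoc, ← E.δ_add, Category.assoc]
    have h2 : E.comp (E.comp (σ X₀ X₁ c₀) (σ X₁ X₂ c₁)) (σ X₂ X₃ c₂)
        = E.comp (σ X₀ X₃ (c₀ ≫ c₁ ≫ c₂))
            (E.δ X₃ (z X₀ X₁ X₃ (c₁ ≫ c₂) c₀ + z X₁ X₂ X₃ c₂ c₁)) := by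
      rw [E.assoc, hz, ← E.assoc, hz, E.assoc, ← E.δ_add]
    have h := cancel _ _ _ (h1.symm.trans h2)
    rw [sub_sub, sub_eq_zero, add_comm]
    exact h
  · intro σ' hσ'π hσ'1 z' hz'
    have hex : ∀ (X Y : C) (c : X ⟶ Y), ∃ a, σ' X Y c = E.comp (σ X Y c) (E.δ Y a) :=
      fun X Y c => E.π_fiber _ _ (by rw [hσπ, hσ'π])
    choose u hu using hex
    refine ⟨u, ?_⟩
    intro X₀ X₁ X₂ c₀ c₁
    have hA : E.comp (σ' X₀ X₁ c₀) (σ' X₁ X₂ c₁)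
        = E.comp (σ X₀ X₂ (c₀ ≫ c₁))
            (E.δ X₂ (u X₀ X₂ (c₀ ≫ c₁) + z' X₀ X₁ X₂ c₁ c₀)) := by
      rw [hz', hu, E.assoc, ← E.δ_add]
    have hB : E.comp (σ' X₀ X₁ c₀) (σ' X₁ X₂ c₁)
        = E.comp (σ X₀ X₂ (c₀ ≫ c₁))
            (E.δ X₂ (z X₀ X₁ X₂ c₁ c₀ + (φ X₁ X₂ c₁ (u X₀ X₁ c₀) + u X₁ X₂ c₁))) := by
      rw [hu X₀ X₁ c₀, hu X₁ X₂ c₁, E.assoc, ← E.assoc (E.δ X₁ (u X₀ X₁ c₀)),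
        E.compat, hσπ, E.assoc, ← E.δ_add, ← E.assoc, hz, E.assoc, ← E.δ_add]
    have h := cancel _ _ _ (hA.symm.trans hB)
    calc z' X₀ X₁ X₂ c₁ c₀
        = (u X₀ X₂ (c₀ ≫ c₁) + z' X₀ X₁ X₂ c₁ c₀) - u X₀ X₂ (c₀ ≫ c₁) := by abel
      _ = (z X₀ X₁ X₂ c₁ c₀ + (φ X₁ X₂ c₁ (u X₀ X₁ c₀) + u X₁ X₂ c₁))
            - u X₀ X₂ (c₀ ≫ c₁) := by rw [h]
      _ = z X₀ X₁ X₂ c₁ c₀ + (u X₁ X₂ c₁ - u X₀ X₂ (c₀ ≫ c₁)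
            + φ X₁ X₂ c₁ (u X₀ X₁ c₀)) := by abel
end

section
/- Let E = (D, C, Φ, π, δ) be an extension of a small category C by a functor Φ : C → Ab, with associated class [D] ∈ H^2(C, Φ). Then [D] = 0 if and only if there exists a functor s : C → D which is a section of π (i.e., π ∘ s = Id_C). -/
open CategoryTheory

/-- Cancellation: the free action means post-composition with `δ` is injective. -/
theorem CatExtension.cancel {C : Type*} [Category C]
    {M : C → Type*} [∀ X, AddCommGroup (M X)]
    {φ : ∀ (X Y : C), (X ⟶ Y) → (M X →+ M Y)} (E : CatExtension C M φ)
    {X Y : C} (d : E.Hom X Y) (a b : M Y)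
    (h : E.comp d (E.δ Y a) = E.comp d (E.δ Y b)) : a = b := by
  have key : E.comp (E.comp d (E.δ Y b)) (E.δ Y (a - b)) = E.comp d (E.δ Y b) := by
    rw [E.assoc, ← E.δ_add]
    have : b + (a - b) = a := by abel
    rw [this, h]
  have := E.δ_free _ _ key
  exact sub_eq_zero.mp this

/-- For an extension `E` of `C` by `Φ`, the extension class `[D] ∈ H²(C,Φ)` vanishes
(i.e. the 2-cocycle of every regular section is a coboundary) if and only if the
projection `π : D → C` admits a functorial section. -/
theorem extension_class_zero_iff_splits
    {C : Type*} [Category C] (M : C → Type*) [∀ X, AddCommGroup (M X)]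
    (φ : ∀ (X Y : C), (X ⟶ Y) → (M X →+ M Y))
    (φ_id : ∀ X : C, φ X X (𝟙 X) = AddMonoidHom.id (M X))
    (φ_comp : ∀ (X Y Z : C) (f : X ⟶ Y) (g : Y ⟶ Z),
      φ X Z (f ≫ g) = (φ Y Z g).comp (φ X Y f))
    (E : CatExtension C M φ) :
    (∀ (σ : ∀ (X Y : C), (X ⟶ Y) → E.Hom X Y),
      (∀ (X Y : C) (c : X ⟶ Y), E.π (σ X Y c) = c) →
      (∀ X : C, σ X X (𝟙 X) = E.id X) →
      ∀ (z : ∀ (X₀ X₁ X₂ : C), (X₁ ⟶ X₂) → (X₀ ⟶ X₁) → M X₂),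
        (∀ (X₀ X₁ X₂ : C) (c₀ : X₀ ⟶ X₁) (c₁ : X₁ ⟶ X₂),
          E.comp (σ X₀ X₁ c₀) (σ X₁ X₂ c₁) =
            E.comp (σ X₀ X₂ (c₀ ≫ c₁)) (E.δ X₂ (z X₀ X₁ X₂ c₁ c₀))) →
        -- the cocycle of the section is a coboundary
        ∃ u : ∀ (X Y : C), (X ⟶ Y) → M Y,
          ∀ (X₀ X₁ X₂ : C) (c₀ : X₀ ⟶ X₁) (c₁ : X₁ ⟶ X₂),
            z X₀ X₁ X₂ c₁ c₀ =
              u X₁ X₂ c₁ - u X₀ X₂ (c₀ ≫ c₁) + φ X₁ X₂ c₁ (u X₀ X₁ c₀))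
    ↔
    -- there is a functorial section of π
    (∃ s : ∀ (X Y : C), (X ⟶ Y) → E.Hom X Y,
      (∀ (X Y : C) (c : X ⟶ Y), E.π (s X Y c) = c) ∧
      (∀ X : C, s X X (𝟙 X) = E.id X) ∧
      (∀ (X₀ X₁ X₂ : C) (c₀ : X₀ ⟶ X₁) (c₁ : X₁ ⟶ X₂),
        s X₀ X₂ (c₀ ≫ c₁) = E.comp (s X₀ X₁ c₀) (s X₁ X₂ c₁))) := by
  constructor
  · -- cocycle is a coboundary ⟹ functorial section
    intro h
    classical
    -- a raw set-theoretic section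
    let σ0 : ∀ (X Y : C), (X ⟶ Y) → E.Hom X Y := fun X Y c => (E.π_surj c).choose
    have hσ0 : ∀ (X Y : C) (c : X ⟶ Y), E.π (σ0 X Y c) = c :=
      fun X Y c => (E.π_surj c).choose_spec
    -- normalize at identities to get a regular section
    let σ : ∀ (X Y : C), (X ⟶ Y) → E.Hom X Y := fun X Y c =>
      if h : X = Y ∧ HEq c (𝟙 X) then h.1 ▸ E.id X else σ0 X Y c
    have hσid : ∀ X : C, σ X X (𝟙 X) = E.id X := by
      intro X
      have hc : X = X ∧ HEq (𝟙 X) (𝟙 X) := ⟨rfl, HEq.rfl⟩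
      show (if h : X = X ∧ HEq (𝟙 X) (𝟙 X) then h.1 ▸ E.id X else σ0 X X (𝟙 X)) = E.id X
      rw [dif_pos hc]
    have hσπ : ∀ (X Y : C) (c : X ⟶ Y), E.π (σ X Y c) = c := by
      intro X Y c
      by_cases hc : X = Y ∧ HEq c (𝟙 X)
      · obtain ⟨e, he⟩ := hc
        subst e
        have hce : c = 𝟙 X := eq_of_heq he
        subst hce
        rw [hσid X, E.π_id]
      · show E.π (if h : X = Y ∧ HEq c (𝟙 X) then h.1 ▸ E.id X else σ0 X Y c) = c
        rw [dif_neg hc]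
        exact hσ0 X Y c
    -- the associated cocycle
    have hzπ : ∀ {X₀ X₁ X₂ : C} (c₀ : X₀ ⟶ X₁) (c₁ : X₁ ⟶ X₂),
        E.π (σ X₀ X₂ (c₀ ≫ c₁)) = E.π (E.comp (σ X₀ X₁ c₀) (σ X₁ X₂ c₁)) := by
      intro X₀ X₁ X₂ c₀ c₁
      rw [E.π_comp, hσπ, hσπ, hσπ]
    let z : ∀ (X₀ X₁ X₂ : C), (X₁ ⟶ X₂) → (X₀ ⟶ X₁) → M X₂ := fun X₀ X₁ X₂ c₁ c₀ =>
      (E.π_fiber _ _ (hzπ c₀ c₁)).choose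
    have hz : ∀ (X₀ X₁ X₂ : C) (c₀ : X₀ ⟶ X₁) (c₁ : X₁ ⟶ X₂),
        E.comp (σ X₀ X₁ c₀) (σ X₁ X₂ c₁) =
          E.comp (σ X₀ X₂ (c₀ ≫ c₁)) (E.δ X₂ (z X₀ X₁ X₂ c₁ c₀)) :=
      fun X₀ X₁ X₂ c₀ c₁ => (E.π_fiber _ _ (hzπ c₀ c₁)).choose_spec
    obtain ⟨u, hu⟩ := h σ hσπ hσid z hz
    -- normalization of the cocycle and of u at identities
    have hz1 : ∀ X : C, z X X X (𝟙 X) (𝟙 X) = 0 := by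
      intro X
      apply E.δ_free (E.id X)
      have h1 := hz X X X (𝟙 X) (𝟙 X)
      rw [Category.comp_id, hσid, E.id_comp, E.id_comp] at h1
      rw [E.id_comp]
      exact h1.symm
    have hu1 : ∀ X : C, u X X (𝟙 X) = 0 := by
      intro X
      have h1 := hu X X X (𝟙 X) (𝟙 X)
      rw [hz1, Category.comp_id, φ_id] at h1
      simpa using h1.symm
    -- the corrected section is functorial
    refine ⟨fun X Y c => E.comp (σ X Y c) (E.δ Y (- u X Y c)), ?_, ?_, ?_⟩
    · intro X Y c
      rw [E.π_comp, hσπ, E.π_δ, Category.comp_id]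
    · intro X
      show E.comp (σ X X (𝟙 X)) (E.δ X (- u X X (𝟙 X))) = E.id X
      rw [hσid, hu1, neg_zero, E.δ_zero, E.comp_id]
    · intro X₀ X₁ X₂ c₀ c₁
      have hA : E.comp (E.δ X₁ (- u X₀ X₁ c₀)) (σ X₁ X₂ c₁)
          = E.comp (σ X₁ X₂ c₁) (E.δ X₂ (φ X₁ X₂ c₁ (- u X₀ X₁ c₀))) := by
        have h2 := E.compat (σ X₁ X₂ c₁) (- u X₀ X₁ c₀)
        rwa [hσπ] at h2
      conv_rhs => rw [E.assoc, ← E.assoc (E.δ X₁ (- u X₀ X₁ c₀)) (σ X₁ X₂ c₁), hA,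
        E.assoc (σ X₁ X₂ c₁), ← E.δ_add, ← E.assoc, hz X₀ X₁ X₂ c₀ c₁, E.assoc, ← E.δ_add]
      congr 1
      congr 1
      rw [hu X₀ X₁ X₂ c₀ c₁, map_neg]
      abel
  · -- functorial section ⟹ every cocycle is a coboundary
    rintro ⟨s, hsπ, hsid, hscomp⟩ σ hσπ hσid z hz
    have hfib : ∀ (X Y : C) (c : X ⟶ Y), E.π (s X Y c) = E.π (σ X Y c) := by
      intro X Y c; rw [hsπ, hσπ]
    refine ⟨fun X Y c => (E.π_fiber _ _ (hfib X Y c)).choose, ?_⟩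
    have hu : ∀ (X Y : C) (c : X ⟶ Y),
        σ X Y c = E.comp (s X Y c) (E.δ Y ((E.π_fiber _ _ (hfib X Y c)).choose)) :=
      fun X Y c => (E.π_fiber _ _ (hfib X Y c)).choose_spec
    set u : ∀ (X Y : C), (X ⟶ Y) → M Y := fun X Y c => (E.π_fiber _ _ (hfib X Y c)).choose
      with hudef
    intro X₀ X₁ X₂ c₀ c₁
    have hA : E.comp (E.δ X₁ (u X₀ X₁ c₀)) (s X₁ X₂ c₁)
        = E.comp (s X₁ X₂ c₁) (E.δ X₂ (φ X₁ X₂ c₁ (u X₀ X₁ c₀))) := by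
      have h2 := E.compat (s X₁ X₂ c₁) (u X₀ X₁ c₀)
      rwa [hsπ] at h2
    have eq1 : E.comp (σ X₀ X₁ c₀) (σ X₁ X₂ c₁)
        = E.comp (s X₀ X₂ (c₀ ≫ c₁)) (E.δ X₂ (u X₀ X₂ (c₀ ≫ c₁) + z X₀ X₁ X₂ c₁ c₀)) := by
      rw [hz X₀ X₁ X₂ c₀ c₁, hu X₀ X₂ (c₀ ≫ c₁), E.assoc, ← E.δ_add]
    have eq2 : E.comp (σ X₀ X₁ c₀) (σ X₁ X₂ c₁)
        = E.comp (s X₀ X₂ (c₀ ≫ c₁))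
            (E.δ X₂ (φ X₁ X₂ c₁ (u X₀ X₁ c₀) + u X₁ X₂ c₁)) := by
      rw [hu X₀ X₁ c₀, hu X₁ X₂ c₁, E.assoc,
        ← E.assoc (E.δ X₁ (u X₀ X₁ c₀)) (s X₁ X₂ c₁), hA,
        E.assoc (s X₁ X₂ c₁), ← E.δ_add, ← E.assoc, ← hscomp]
    have key := E.cancel _ _ _ (eq1.symm.trans eq2)
    have h2 : z X₀ X₁ X₂ c₁ c₀
        = φ X₁ X₂ c₁ (u X₀ X₁ c₀) + u X₁ X₂ c₁ - u X₀ X₂ (c₀ ≫ c₁) := by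
      rw [← key]; abel
    rw [h2]; abel
end

section
/- Let E = (D, C, Φ, π, δ) be an extension of a small category C by a functor Φ : C → Ab. Let Aut(E; 1_C, 1_Φ) be the group of self-isomorphisms Ψ of D satisfying π∘Ψ = π (inducing the identity on C) and inducing the identity natural transformation on Φ, and let Inn(E) be the inner automorphisms τ_u (for choices u(X) ∈ Φ(X), defined by τ_u(d) = δ(u(Y))∘d∘δ(u(X))^{-1}). Then H^1(C, Φ) ≅ Aut(E; 1_C, 1_Φ)/Inn(E). -/
open CategoryTheory

variable {C : Type*} [Category C] (M : C → Type*) [∀ X, AddCommGroup (M X)]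
  (φ : ∀ (X Y : C), (X ⟶ Y) → (M X →+ M Y))

/-- The 1-cocycle condition for a 1-cochain with values in `Φ`. -/
def IsCocycle1 (z : ∀ (X Y : C), (X ⟶ Y) → M Y) : Prop :=
  ∀ (X₀ X₁ X₂ : C) (c₀ : X₀ ⟶ X₁) (c₁ : X₁ ⟶ X₂),
    z X₀ X₂ (c₀ ≫ c₁) = z X₁ X₂ c₁ + φ X₁ X₂ c₁ (z X₀ X₁ c₀)

/-- Two 1-cochains are cohomologous if they differ by the coboundary of a 0-cochain. -/
def Cohomologous1 (z z' : ∀ (X Y : C), (X ⟶ Y) → M Y) : Prop :=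
  ∃ u : ∀ X : C, M X,
    ∀ (X Y : C) (c : X ⟶ Y), z' X Y c = z X Y c + (u Y - φ X Y c (u X))

variable (E : CatExtension C M φ)

/-- An automorphism of the extension `E` covering the identity of `C` and inducing the
identity on `Φ`: a self-isomorphism of `D` fixing objects, commuting with `π` and with the
distinguished automorphisms `δ`. -/
def IsExtAut (Ψ : ∀ (X Y : C), E.Hom X Y → E.Hom X Y) : Prop :=
  (∀ X Y : C, Function.Bijective (Ψ X Y)) ∧
  (∀ X : C, Ψ X X (E.id X) = E.id X) ∧
  (∀ (X Y Z : C) (d₁ : E.Hom X Y) (d₂ : E.Hom Y Z),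
    Ψ X Z (E.comp d₁ d₂) = E.comp (Ψ X Y d₁) (Ψ Y Z d₂)) ∧
  (∀ (X Y : C) (d : E.Hom X Y), E.π (Ψ X Y d) = E.π d) ∧
  (∀ (X : C) (a : M X), Ψ X X (E.δ X a) = E.δ X a)

/-- Two automorphisms of `E` differ by an inner automorphism `τ_u`
(where `τ_u(d) = δ(u Y) ∘ d ∘ δ(u X)⁻¹`). -/
def InnRelated (Ψ Ψ' : {Ψ : ∀ (X Y : C), E.Hom X Y → E.Hom X Y // IsExtAut M φ E Ψ}) :
    Prop :=
  ∃ u : ∀ X : C, M X,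
    ∀ (X Y : C) (d : E.Hom X Y),
      Ψ'.1 X Y d = E.comp (E.comp (E.δ X (-(u X))) (Ψ.1 X Y d)) (E.δ Y (u Y))


/-! ### Auxiliary machinery for the proof -/

section Aux

variable {M φ E}
variable {X Y Z : C}

lemma CatExtAux.comp_δδ (d : E.Hom X Y) (a b : M Y) :
    E.comp (E.comp d (E.δ Y a)) (E.δ Y b) = E.comp d (E.δ Y (a + b)) := by
  rw [E.assoc, ← E.δ_add]

lemma CatExtAux.δ_cancel {d : E.Hom X Y} {a b : M Y}
    (h : E.comp d (E.δ Y a) = E.comp d (E.δ Y b)) : a = b := by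
  have h2 : E.comp d (E.δ Y (b + -a)) = d := by
    rw [← CatExtAux.comp_δδ, ← h, CatExtAux.comp_δδ, add_neg_cancel, E.δ_zero, E.comp_id]
  have h3 := E.δ_free d (b + -a) h2
  have h4 : b + -a + a = 0 + a := by rw [h3]
  simpa using h4.symm

lemma CatExtAux.π_compδ (d : E.Hom X Y) (a : M Y) :
    E.π (E.comp d (E.δ Y a)) = E.π d := by
  rw [E.π_comp, E.π_δ, Category.comp_id]

lemma CatExtAux.cocycle_id {z : ∀ (X Y : C), (X ⟶ Y) → M Y} (hz : IsCocycle1 M φ z)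
    (φ_id : ∀ X : C, φ X X (𝟙 X) = AddMonoidHom.id (M X)) (X : C) :
    z X X (𝟙 X) = 0 := by
  have h := hz X X X (𝟙 X) (𝟙 X)
  rw [Category.id_comp, φ_id] at h
  exact (left_eq_add.mp h)

/-- The automorphism `α_z` attached to a cochain `z`. -/
def CatExtAux.aFun (z : ∀ (X Y : C), (X ⟶ Y) → M Y) :
    ∀ (X Y : C), E.Hom X Y → E.Hom X Y :=
  fun _ Y d => E.comp d (E.δ Y (z _ Y (E.π d)))

lemma CatExtAux.aFun_isExtAut {z : ∀ (X Y : C), (X ⟶ Y) → M Y} (hz : IsCocycle1 M φ z)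
    (φ_id : ∀ X : C, φ X X (𝟙 X) = AddMonoidHom.id (M X)) :
    IsExtAut M φ E (CatExtAux.aFun z) := by
  refine ⟨?_, ?_, ?_, ?_, ?_⟩
  · intro X Y
    have hgf : Function.LeftInverse
        (fun d : E.Hom X Y => E.comp d (E.δ Y (-(z X Y (E.π d)))))
        (CatExtAux.aFun (E := E) z X Y) := by
      intro d
      simp only [CatExtAux.aFun]
      rw [CatExtAux.π_compδ, CatExtAux.comp_δδ, add_neg_cancel, E.δ_zero, E.comp_id]
    have hfg : Function.RightInverse
        (fun d : E.Hom X Y => E.comp d (E.δ Y (-(z X Y (E.π d)))))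
        (CatExtAux.aFun (E := E) z X Y) := by
      intro d
      simp only [CatExtAux.aFun]
      rw [CatExtAux.π_compδ, CatExtAux.comp_δδ, neg_add_cancel, E.δ_zero, E.comp_id]
    exact ⟨hgf.injective, hfg.surjective⟩
  · intro X
    simp only [CatExtAux.aFun]
    rw [E.π_id, CatExtAux.cocycle_id hz φ_id, E.δ_zero, E.comp_id]
  · intro X Y Z d₁ d₂
    simp only [CatExtAux.aFun]
    have hcompat := E.compat (E.comp d₂ (E.δ Z (z Y Z (E.π d₂)))) (z X Y (E.π d₁))
    rw [CatExtAux.π_compδ] at hcompat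
    rw [E.π_comp, hz X Y Z (E.π d₁) (E.π d₂)]
    conv_rhs => rw [E.assoc, hcompat, ← E.assoc, ← E.assoc, CatExtAux.comp_δδ]
  · intro X Y d
    simp only [CatExtAux.aFun]
    exact CatExtAux.π_compδ d _
  · intro X a
    simp only [CatExtAux.aFun]
    rw [E.π_δ, CatExtAux.cocycle_id hz φ_id, E.δ_zero, E.comp_id]

lemma CatExtAux.zOf_exists {Ψ : ∀ (X Y : C), E.Hom X Y → E.Hom X Y}
    (hΨ : IsExtAut M φ E Ψ) (c : X ⟶ Y) :
    ∃ a : M Y, ∀ d : E.Hom X Y, E.π d = c → Ψ X Y d = E.comp d (E.δ Y a) := by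
  obtain ⟨d₀, hd₀⟩ := E.π_surj c
  obtain ⟨a, ha⟩ := E.π_fiber d₀ (Ψ X Y d₀) (hΨ.2.2.2.1 X Y d₀).symm
  refine ⟨a, fun d hd => ?_⟩
  obtain ⟨b, hb⟩ := E.π_fiber d₀ d (by rw [hd₀, hd])
  rw [hb, hΨ.2.2.1 X Y Y d₀ (E.δ Y b), hΨ.2.2.2.2 Y b, ha,
    CatExtAux.comp_δδ, CatExtAux.comp_δδ, add_comm a b]

/-- The cocycle attached to an automorphism. -/
noncomputable def CatExtAux.zOf (Ψ : ∀ (X Y : C), E.Hom X Y → E.Hom X Y)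
    (hΨ : IsExtAut M φ E Ψ) : ∀ (X Y : C), (X ⟶ Y) → M Y :=
  fun _ _ c => (CatExtAux.zOf_exists hΨ c).choose

lemma CatExtAux.zOf_spec {Ψ : ∀ (X Y : C), E.Hom X Y → E.Hom X Y}
    (hΨ : IsExtAut M φ E Ψ) (c : X ⟶ Y) (d : E.Hom X Y) (hd : E.π d = c) :
    Ψ X Y d = E.comp d (E.δ Y (CatExtAux.zOf Ψ hΨ X Y c)) :=
  (CatExtAux.zOf_exists hΨ c).choose_spec d hd

lemma CatExtAux.zOf_isCocycle {Ψ : ∀ (X Y : C), E.Hom X Y → E.Hom X Y}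
    (hΨ : IsExtAut M φ E Ψ) : IsCocycle1 M φ (CatExtAux.zOf Ψ hΨ) := by
  intro X₀ X₁ X₂ c₀ c₁
  obtain ⟨d₀, hd₀⟩ := E.π_surj c₀
  obtain ⟨d₁, hd₁⟩ := E.π_surj c₁
  set z₀ := CatExtAux.zOf Ψ hΨ X₀ X₁ c₀ with hz₀
  set z₁ := CatExtAux.zOf Ψ hΨ X₁ X₂ c₁ with hz₁
  have h01 : E.π (E.comp d₀ d₁) = c₀ ≫ c₁ := by rw [E.π_comp, hd₀, hd₁]
  have hL := CatExtAux.zOf_spec hΨ (c₀ ≫ c₁) (E.comp d₀ d₁) h01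
  have hR : Ψ X₀ X₂ (E.comp d₀ d₁) =
      E.comp (E.comp d₀ d₁) (E.δ X₂ (z₁ + φ X₁ X₂ c₁ z₀)) := by
    rw [hΨ.2.2.1 X₀ X₁ X₂ d₀ d₁, CatExtAux.zOf_spec hΨ c₀ d₀ hd₀,
      CatExtAux.zOf_spec hΨ c₁ d₁ hd₁]
    have hcompat := E.compat (E.comp d₁ (E.δ X₂ z₁)) z₀
    rw [CatExtAux.π_compδ, hd₁] at hcompat
    conv_lhs => rw [E.assoc, hcompat, ← E.assoc, ← E.assoc, CatExtAux.comp_δδ]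
  rw [hL] at hR
  exact CatExtAux.δ_cancel hR

/-- Conjugation by `δ(u)` computation. -/
lemma CatExtAux.conj_eq (u : ∀ X : C, M X) {d : E.Hom X Y} {a : M Y}
    (c : X ⟶ Y) (hc : E.π d = c) :
    E.comp (E.comp (E.δ X (-(u X))) (E.comp d (E.δ Y a))) (E.δ Y (u Y)) =
      E.comp d (E.δ Y (a + (u Y - φ X Y c (u X)))) := by
  have hcompat := E.compat (E.comp d (E.δ Y a)) (-(u X))
  rw [CatExtAux.π_compδ, hc] at hcompat
  rw [hcompat, CatExtAux.comp_δδ, CatExtAux.comp_δδ, map_neg]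
  congr 2
  abel

end Aux

/-- `H¹(C,Φ)` is isomorphic to `Aut(E; 1_C, 1_Φ)/Inn(E)`: there is a bijection `F` between
1-cocycles modulo coboundaries and automorphisms of the extension (over `Id_C`, inducing
the identity on `Φ`) modulo inner automorphisms; `F` sends the class of a 1-cocycle `z` to
the class of the automorphism `α_z : d ↦ δ(z(π d)) ∘ d`, and `F` is a homomorphism
(it takes sums of cocycles to composites of automorphisms). -/
theorem h1_iso_extension_automorphisms
    (φ_id : ∀ X : C, φ X X (𝟙 X) = AddMonoidHom.id (M X))
    (φ_comp : ∀ (X Y Z : C) (f : X ⟶ Y) (g : Y ⟶ Z),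
      φ X Z (f ≫ g) = (φ Y Z g).comp (φ X Y f)) :
    ∃ F : Quot (fun z z' : {z : ∀ (X Y : C), (X ⟶ Y) → M Y // IsCocycle1 M φ z} =>
            Cohomologous1 M φ z.1 z'.1) ≃
          Quot (InnRelated M φ E),
      -- F sends the class of a cocycle z to the class of α_z
      (∀ (z : {z : ∀ (X Y : C), (X ⟶ Y) → M Y // IsCocycle1 M φ z})
         (Ψ : {Ψ : ∀ (X Y : C), E.Hom X Y → E.Hom X Y // IsExtAut M φ E Ψ}),
        (∀ (X Y : C) (d : E.Hom X Y),
          Ψ.1 X Y d = E.comp d (E.δ Y (z.1 X Y (E.π d)))) →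
        F (Quot.mk _ z) = Quot.mk _ Ψ) ∧
      -- F is a group homomorphism: sums of cocycles go to composites of automorphisms
      (∀ (z₁ z₂ z₃ : {z : ∀ (X Y : C), (X ⟶ Y) → M Y // IsCocycle1 M φ z})
         (Ψ₁ Ψ₂ Ψ₃ : {Ψ : ∀ (X Y : C), E.Hom X Y → E.Hom X Y // IsExtAut M φ E Ψ}),
        (∀ (X Y : C) (c : X ⟶ Y), z₃.1 X Y c = z₁.1 X Y c + z₂.1 X Y c) →
        (∀ (X Y : C) (d : E.Hom X Y), Ψ₃.1 X Y d = Ψ₁.1 X Y (Ψ₂.1 X Y d)) →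
        F (Quot.mk _ z₁) = Quot.mk _ Ψ₁ →
        F (Quot.mk _ z₂) = Quot.mk _ Ψ₂ →
        F (Quot.mk _ z₃) = Quot.mk _ Ψ₃) := by
  classical
  set Co := {z : ∀ (X Y : C), (X ⟶ Y) → M Y // IsCocycle1 M φ z} with hCo
  set Au := {Ψ : ∀ (X Y : C), E.Hom X Y → E.Hom X Y // IsExtAut M φ E Ψ} with hAu
  let ab : Co → Au := fun z => ⟨CatExtAux.aFun z.1, CatExtAux.aFun_isExtAut z.2 φ_id⟩
  let zb : Au → Co := fun Ψ => ⟨CatExtAux.zOf Ψ.1 Ψ.2, CatExtAux.zOf_isCocycle Ψ.2⟩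
  have hzb_ab : ∀ z : Co, zb (ab z) = z := by
    intro z
    apply Subtype.ext
    funext X Y c
    obtain ⟨d, hd⟩ := E.π_surj c
    have h1 := CatExtAux.zOf_spec (ab z).2 c d hd
    have h2 : (ab z).1 X Y d = E.comp d (E.δ Y (z.1 X Y c)) := by
      show E.comp d (E.δ Y (z.1 X Y (E.π d))) = _
      rw [hd]
    exact CatExtAux.δ_cancel (h1.symm.trans h2)
  have hab_zb : ∀ Ψ : Au, ab (zb Ψ) = Ψ := by
    intro Ψ
    apply Subtype.ext
    funext X Y d
    show E.comp d (E.δ Y (CatExtAux.zOf Ψ.1 Ψ.2 X Y (E.π d))) = Ψ.1 X Y d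
    exact (CatExtAux.zOf_spec Ψ.2 (E.π d) d rfl).symm
  let rC : Co → Co → Prop := fun z z' => Cohomologous1 M φ z.1 z'.1
  have hab_rel : ∀ z z' : Co, rC z z' → InnRelated M φ E (ab z) (ab z') := by
    rintro z z' ⟨u, hu⟩
    refine ⟨u, fun X Y d => ?_⟩
    show E.comp d (E.δ Y (z'.1 X Y (E.π d))) =
      E.comp (E.comp (E.δ X (-(u X))) (E.comp d (E.δ Y (z.1 X Y (E.π d))))) (E.δ Y (u Y))
    rw [CatExtAux.conj_eq u (E.π d) rfl, hu X Y (E.π d)]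
  have hzb_rel : ∀ Ψ Ψ' : Au, InnRelated M φ E Ψ Ψ' → rC (zb Ψ) (zb Ψ') := by
    rintro Ψ Ψ' ⟨u, hu⟩
    refine ⟨u, fun X Y c => ?_⟩
    obtain ⟨d, hd⟩ := E.π_surj c
    have h1 := CatExtAux.zOf_spec Ψ'.2 c d hd
    have h2 : Ψ'.1 X Y d =
        E.comp d (E.δ Y ((zb Ψ).1 X Y c + (u Y - φ X Y c (u X)))) := by
      rw [hu X Y d, CatExtAux.zOf_spec Ψ.2 c d hd, CatExtAux.conj_eq u c hd]
    exact CatExtAux.δ_cancel (h1.symm.trans h2)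
  have hequiv : Equivalence rC := by
    constructor
    · intro z
      exact ⟨fun _ => 0, by intro X Y c; simp⟩
    · rintro z z' ⟨u, hu⟩
      refine ⟨fun X => -(u X), fun X Y c => ?_⟩
      rw [hu X Y c]
      simp only [map_neg]
      abel
    · rintro z₁ z₂ z₃ ⟨u, hu⟩ ⟨v, hv⟩
      refine ⟨fun X => u X + v X, fun X Y c => ?_⟩
      rw [hv X Y c, hu X Y c]
      simp only [map_add]
      abel
  let F : Quot rC ≃ Quot (InnRelated M φ E) :=
    { toFun := Quot.map ab hab_rel
      invFun := Quot.map zb hzb_rel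
      left_inv := by
        intro q
        induction q using Quot.ind with
        | _ z =>
          show Quot.mk _ (zb (ab z)) = Quot.mk _ z
          rw [hzb_ab z]
      right_inv := by
        intro q
        induction q using Quot.ind with
        | _ Ψ =>
          show Quot.mk _ (ab (zb Ψ)) = Quot.mk _ Ψ
          rw [hab_zb Ψ] }
  refine ⟨F, ?_, ?_⟩
  · intro z Ψ h
    have hΨ : Ψ = ab z := by
      apply Subtype.ext
      funext X Y d
      exact h X Y d
    rw [hΨ]
    rfl
  · intro z₁ z₂ z₃ Ψ₁ Ψ₂ Ψ₃ hz hΨ h₁ h₂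
    have e₁ : Quot.mk rC (zb Ψ₁) = Quot.mk rC z₁ := by
      have h := congrArg F.symm h₁
      rw [Equiv.symm_apply_apply] at h
      exact h.symm
    have e₂ : Quot.mk rC (zb Ψ₂) = Quot.mk rC z₂ := by
      have h := congrArg F.symm h₂
      rw [Equiv.symm_apply_apply] at h
      exact h.symm
    have c₁ : rC (zb Ψ₁) z₁ := by
      have h := Quot.eq.mp e₁
      exact (Equivalence.eqvGen_iff hequiv).mp h
    have c₂ : rC (zb Ψ₂) z₂ := by
      have h := Quot.eq.mp e₂
      exact (Equivalence.eqvGen_iff hequiv).mp h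
    obtain ⟨v₁, hv₁⟩ := hequiv.symm c₁
    obtain ⟨v₂, hv₂⟩ := hequiv.symm c₂
    have hsum : ∀ (X Y : C) (c : X ⟶ Y),
        (zb Ψ₃).1 X Y c = (zb Ψ₁).1 X Y c + (zb Ψ₂).1 X Y c := by
      intro X Y c
      obtain ⟨d, hd⟩ := E.π_surj c
      have h3 := CatExtAux.zOf_spec Ψ₃.2 c d hd
      have h3' : Ψ₃.1 X Y d =
          E.comp d (E.δ Y ((zb Ψ₁).1 X Y c + (zb Ψ₂).1 X Y c)) := by
        rw [hΨ X Y d, CatExtAux.zOf_spec Ψ₂.2 c d hd,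
          Ψ₁.2.2.2.1 X Y Y d (E.δ Y ((zb Ψ₂).1 X Y c)),
          Ψ₁.2.2.2.2.2 Y ((zb Ψ₂).1 X Y c),
          CatExtAux.zOf_spec Ψ₁.2 c d hd, CatExtAux.comp_δδ]
      exact CatExtAux.δ_cancel (h3.symm.trans h3')
    have hfin : rC z₃ (zb Ψ₃) := by
      refine ⟨fun X => v₁ X + v₂ X, fun X Y c => ?_⟩
      rw [hsum X Y c, hv₁ X Y c, hv₂ X Y c, hz X Y c]
      simp only [map_add]
      abel
    calc F (Quot.mk _ z₃) = F (Quot.mk _ (zb Ψ₃)) := by rw [Quot.sound hfin]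
      _ = Quot.mk _ (ab (zb Ψ₃)) := rfl
      _ = Quot.mk _ Ψ₃ := by rw [hab_zb Ψ₃]
end
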